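/- arXiv:2603.13913 — 5 statements merged into one kernel-verified Lean document; each statement's English description precedes it below -/
import Mathlib

section
/- On a well-founded tree T, the maximal bisimulation also satisfies the converse implication: if for all immediate successors ρ₀ of σ there is an immediate successor ρ₁ of τ with ⟨ρ₀,ρ₁⟩ ∈ B and symmetrically, then ⟨σ,τ⟩ ∈ B. Moreover, the maximal bisimulation on a well-founded tree coincides with the kernel of the Mostowski collapse, i.e., σ B τ iff π(σ) = π(τ). -/
/-- A tree: a set of finite sequences closed under initial segments. -/
def IsTree {X : Type*} (T : Set (List X)) : Prop :=
  ∀ σ ∈ T, ∀ τ : List X, τ <+: σ → τ ∈ T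

/-- A well-founded tree: every nonempty set of nodes has a node with no proper
extension in the set. -/
def WFTree {X : Type*} (T : Set (List X)) : Prop :=
  ∀ S : Set (List X), S ⊆ T → S.Nonempty → ∃ σ ∈ S, ∀ τ ∈ S, σ <+: τ → τ = σ

/-- `π` is the Mostowski collapse of `T` under the immediate-successor relation. -/
def IsCollapse {X : Type*} (T : Set (List X)) (π : List X → ZFSet) : Prop :=
  ∀ σ ∈ T, ∀ w, w ∈ π σ ↔ ∃ a, σ ++ [a] ∈ T ∧ π (σ ++ [a]) = w

/-- A bisimulation on the tree `T`. -/
def IsBisim {X : Type*} (T : Set (List X)) (B : List X → List X → Prop) : Prop :=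
  ∀ σ τ, B σ τ → σ ∈ T ∧ τ ∈ T ∧
    (∀ a, σ ++ [a] ∈ T → ∃ b, τ ++ [b] ∈ T ∧ B (σ ++ [a]) (τ ++ [b])) ∧
    (∀ b, τ ++ [b] ∈ T → ∃ a, σ ++ [a] ∈ T ∧ B (σ ++ [a]) (τ ++ [b]))

/-- The maximal bisimulation on `T`: the union of all bisimulations. -/
def MaxBisim {X : Type*} (T : Set (List X)) (σ τ : List X) : Prop :=
  ∃ B, IsBisim T B ∧ B σ τ

/-- On a well-founded tree, the maximal bisimulation satisfies the converse
implication (back-and-forth matching of immediate successors implies membership),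
and it coincides with the kernel of the Mostowski collapse. -/
theorem maxBisim_converse_and_kernel {X : Type*} (T : Set (List X))
    (hT : IsTree T) (hwf : WFTree T) (π : List X → ZFSet) (hπ : IsCollapse T π) :
    (∀ σ ∈ T, ∀ τ ∈ T,
      ((∀ a, σ ++ [a] ∈ T → ∃ b, τ ++ [b] ∈ T ∧ MaxBisim T (σ ++ [a]) (τ ++ [b])) ∧
       (∀ b, τ ++ [b] ∈ T → ∃ a, σ ++ [a] ∈ T ∧ MaxBisim T (σ ++ [a]) (τ ++ [b]))) →
      MaxBisim T σ τ) ∧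
    (∀ σ ∈ T, ∀ τ ∈ T, (MaxBisim T σ τ ↔ π σ = π τ)) := by
  -- B₀: the kernel of π, is a bisimulation
  have hB0 : IsBisim T (fun σ τ => σ ∈ T ∧ τ ∈ T ∧ π σ = π τ) := by
    rintro σ τ ⟨hσ, hτ, heq⟩
    refine ⟨hσ, hτ, ?_, ?_⟩
    · intro a ha
      have : π (σ ++ [a]) ∈ π τ := by
        rw [← heq, hπ σ hσ]; exact ⟨a, ha, rfl⟩
      rw [hπ τ hτ] at this
      obtain ⟨b, hb, hbe⟩ := this
      exact ⟨b, hb, ha, hb, hbe.symm⟩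
    · intro b hb
      have : π (τ ++ [b]) ∈ π σ := by
        rw [heq, hπ τ hτ]; exact ⟨b, hb, rfl⟩
      rw [hπ σ hσ] at this
      obtain ⟨a, ha, hae⟩ := this
      exact ⟨a, ha, ha, hb, hae⟩
  -- any bisimulation is contained in the kernel of π
  have hker : ∀ σ τ, MaxBisim T σ τ → π σ = π τ := by
    by_contra h
    push_neg at h
    obtain ⟨σ₀, τ₀, hm₀, hne₀⟩ := h
    set S : Set (List X) := {σ | σ ∈ T ∧ ∃ τ, MaxBisim T σ τ ∧ π σ ≠ π τ} with hS
    have hSsub : S ⊆ T := fun σ hσ => hσ.1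
    have hσ₀T : σ₀ ∈ T := by
      obtain ⟨B, hB, hb⟩ := hm₀; exact (hB _ _ hb).1
    obtain ⟨σ, hσS, hmax⟩ := hwf S hSsub ⟨σ₀, hσ₀T, τ₀, hm₀, hne₀⟩
    obtain ⟨hσT, τ, ⟨B, hB, hBστ⟩, hne⟩ := hσS
    have hτT : τ ∈ T := (hB _ _ hBστ).2.1
    -- immediate successors of σ are not in S
    have hsucc : ∀ a, σ ++ [a] ∈ T → ∀ ρ, MaxBisim T (σ ++ [a]) ρ →
        π (σ ++ [a]) = π ρ := by
      intro a ha ρ hm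
      by_contra hne'
      have : σ ++ [a] ∈ S := ⟨ha, ρ, hm, hne'⟩
      have := hmax _ this ⟨[a], rfl⟩
      simp at this
    apply hne
    apply ZFSet.ext
    intro w
    constructor
    · intro hw
      rw [hπ σ hσT] at hw
      obtain ⟨a, ha, rfl⟩ := hw
      obtain ⟨b, hb, hBab⟩ := (hB _ _ hBστ).2.2.1 a ha
      rw [hπ τ hτT]
      exact ⟨b, hb, (hsucc a ha _ ⟨B, hB, hBab⟩).symm⟩
    · intro hw
      rw [hπ τ hτT] at hw
      obtain ⟨b, hb, rfl⟩ := hw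
      obtain ⟨a, ha, hBab⟩ := (hB _ _ hBστ).2.2.2 b hb
      rw [hπ σ hσT]
      exact ⟨a, ha, hsucc a ha _ ⟨B, hB, hBab⟩⟩
  have hiff : ∀ σ ∈ T, ∀ τ ∈ T, (MaxBisim T σ τ ↔ π σ = π τ) := by
    intro σ hσ τ hτ
    exact ⟨hker σ τ, fun h => ⟨_, hB0, hσ, hτ, h⟩⟩
  refine ⟨?_, hiff⟩
  intro σ hσ τ hτ ⟨h1, h2⟩
  rw [hiff σ hσ τ hτ]
  apply ZFSet.ext
  intro w
  constructor
  · intro hw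
    rw [hπ σ hσ] at hw
    obtain ⟨a, ha, rfl⟩ := hw
    obtain ⟨b, hb, hm⟩ := h1 a ha
    rw [hπ τ hτ]
    exact ⟨b, hb, (hker _ _ hm).symm⟩
  · intro hw
    rw [hπ τ hτ] at hw
    obtain ⟨b, hb, rfl⟩ := hw
    obtain ⟨a, ha, hm⟩ := h2 b hb
    rw [hπ σ hσ]
    exact ⟨a, ha, hker _ _ hm⟩
end

section
/- If T₀ and T₁ are well-founded trees with collapsing functions giving values πT₀ and πT₁ at the root, then the collapse of the tree Pair(T₀,T₁) = (0)⌢T₀ ∪ (1)⌢T₁ at the root equals {πT₀, πT₁}, and the collapse of OPair(T₀,T₁) = Pair(Pair(T₀,T₀), Pair(T₀,T₁)) at the root equals the Kuratowski ordered pair ⟨πT₀, πT₁⟩ = {{πT₀},{πT₀,πT₁}}. -/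
/-- `(a)⌢T = {(a)⌢τ : τ ∈ T} ∪ {∅}`. -/
def cone {X : Type*} (a : X) (T : Set (List X)) : Set (List X) :=
  {l | l = [] ∨ ∃ τ ∈ T, l = a :: τ}

/-- `Pair(T₀,T₁) = (0)⌢T₀ ∪ (1)⌢T₁`. -/
def PairT {X : Type*} (x0 x1 : X) (T₀ T₁ : Set (List X)) : Set (List X) :=
  cone x0 T₀ ∪ cone x1 T₁

/-- `OPair(T₀,T₁) = Pair(Pair(T₀,T₀), Pair(T₀,T₁))`. -/
def OPairT {X : Type*} (x0 x1 : X) (T₀ T₁ : Set (List X)) : Set (List X) :=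
  PairT x0 x1 (PairT x0 x1 T₀ T₀) (PairT x0 x1 T₀ T₁)

lemma collapse_unique {X : Type*} {T : Set (List X)} (hw : WFTree T)
    {π π' : List X → ZFSet} (h : IsCollapse T π) (h' : IsCollapse T π') :
    ∀ σ ∈ T, π σ = π' σ := by
  by_contra hc
  push_neg at hc
  obtain ⟨σ, hσ, hne⟩ := hc
  obtain ⟨μ, ⟨hμT, hμne⟩, hmax⟩ :=
    hw {τ | τ ∈ T ∧ π τ ≠ π' τ} (fun τ ht => ht.1) ⟨σ, hσ, hne⟩
  apply hμne
  have hsucc : ∀ a, μ ++ [a] ∈ T → π (μ ++ [a]) = π' (μ ++ [a]) := by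
    intro a ha
    by_contra hne2
    have := hmax (μ ++ [a]) ⟨ha, hne2⟩ ⟨[a], rfl⟩
    simp at this
  apply ZFSet.ext
  intro w
  rw [h μ hμT w, h' μ hμT w]
  constructor
  · rintro ⟨a, ha, rfl⟩; exact ⟨a, ha, (hsucc a ha).symm⟩
  · rintro ⟨a, ha, rfl⟩; exact ⟨a, ha, hsucc a ha⟩

lemma nil_mem_pair {X : Type*} (x0 x1 : X) (T₀ T₁ : Set (List X)) :
    [] ∈ PairT x0 x1 T₀ T₁ := Or.inl (Or.inl rfl)

lemma cons0_mem_pair {X : Type*} {x0 x1 : X} (hx : x0 ≠ x1)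
    (T₀ T₁ : Set (List X)) (σ : List X) :
    x0 :: σ ∈ PairT x0 x1 T₀ T₁ ↔ σ ∈ T₀ := by
  simp [PairT, cone, hx, hx.symm, eq_comm]

lemma cons1_mem_pair {X : Type*} {x0 x1 : X} (hx : x0 ≠ x1)
    (T₀ T₁ : Set (List X)) (σ : List X) :
    x1 :: σ ∈ PairT x0 x1 T₀ T₁ ↔ σ ∈ T₁ := by
  simp [PairT, cone, hx, hx.symm, eq_comm]

lemma single_mem_pair {X : Type*} {x0 x1 : X} (hx : x0 ≠ x1)
    {T₀ T₁ : Set (List X)} (hr0 : [] ∈ T₀) (hr1 : [] ∈ T₁) (a : X) :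
    [a] ∈ PairT x0 x1 T₀ T₁ ↔ a = x0 ∨ a = x1 := by
  constructor
  · rintro ((h | ⟨τ, _, h⟩) | (h | ⟨τ, _, h⟩)) <;> simp_all
  · rintro (rfl | rfl)
    · exact (cons0_mem_pair hx T₀ T₁ []).2 hr0
    · exact (cons1_mem_pair hx T₀ T₁ []).2 hr1

lemma tree_pair {X : Type*} (x0 x1 : X) {T₀ T₁ : Set (List X)}
    (h0 : IsTree T₀) (h1 : IsTree T₁) : IsTree (PairT x0 x1 T₀ T₁) := by
  rintro σ hσ τ hτ
  rcases hσ with (rfl | ⟨τ₀, hτ₀, rfl⟩) | (rfl | ⟨τ₀, hτ₀, rfl⟩)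
  · rw [List.prefix_nil.1 hτ]; exact nil_mem_pair x0 x1 T₀ T₁
  · rcases τ with _ | ⟨b, τ'⟩
    · exact nil_mem_pair x0 x1 T₀ T₁
    · obtain ⟨rfl, hpre⟩ := List.cons_prefix_cons.1 hτ
      exact Or.inl (Or.inr ⟨τ', h0 τ₀ hτ₀ τ' hpre, rfl⟩)
  · rw [List.prefix_nil.1 hτ]; exact nil_mem_pair x0 x1 T₀ T₁
  · rcases τ with _ | ⟨b, τ'⟩
    · exact nil_mem_pair x0 x1 T₀ T₁
    · obtain ⟨rfl, hpre⟩ := List.cons_prefix_cons.1 hτ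
      exact Or.inr (Or.inr ⟨τ', h1 τ₀ hτ₀ τ' hpre, rfl⟩)

lemma wf_pair {X : Type*} {x0 x1 : X} (hx : x0 ≠ x1) {T₀ T₁ : Set (List X)}
    (hw0 : WFTree T₀) (hw1 : WFTree T₁) : WFTree (PairT x0 x1 T₀ T₁) := by
  intro S hS hne
  by_cases h0 : ∃ σ, x0 :: σ ∈ S
  · obtain ⟨μ, hμ, hmax⟩ := hw0 {σ | x0 :: σ ∈ S}
      (fun σ hσ => (cons0_mem_pair hx T₀ T₁ σ).1 (hS hσ)) h0
    refine ⟨x0 :: μ, hμ, ?_⟩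
    rintro τ hτ ⟨t, rfl⟩
    have h' : x0 :: (μ ++ t) ∈ S := hτ
    have := hmax (μ ++ t) h' ⟨t, rfl⟩
    show x0 :: (μ ++ t) = x0 :: μ
    rw [this]
  · by_cases h1 : ∃ σ, x1 :: σ ∈ S
    · obtain ⟨μ, hμ, hmax⟩ := hw1 {σ | x1 :: σ ∈ S}
        (fun σ hσ => (cons1_mem_pair hx T₀ T₁ σ).1 (hS hσ)) h1
      refine ⟨x1 :: μ, hμ, ?_⟩
      rintro τ hτ ⟨t, rfl⟩
      have h' : x1 :: (μ ++ t) ∈ S := hτ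
      have := hmax (μ ++ t) h' ⟨t, rfl⟩
      show x1 :: (μ ++ t) = x1 :: μ
      rw [this]
    · have hall : ∀ τ ∈ S, τ = [] := by
        intro τ hτ
        rcases hS hτ with (rfl | ⟨τ₀, _, rfl⟩) | (rfl | ⟨τ₀, _, rfl⟩)
        · rfl
        · exact absurd ⟨τ₀, hτ⟩ h0
        · rfl
        · exact absurd ⟨τ₀, hτ⟩ h1
      obtain ⟨σ, hσ⟩ := hne
      exact ⟨σ, hσ, fun τ hτ _ => (hall τ hτ).trans (hall σ hσ).symm⟩

lemma collapse_cone0 {X : Type*} {x0 x1 : X} (hx : x0 ≠ x1) {T₀ T₁ : Set (List X)}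
    {π : List X → ZFSet} (hπ : IsCollapse (PairT x0 x1 T₀ T₁) π) :
    IsCollapse T₀ (fun σ => π (x0 :: σ)) := by
  intro σ hσ w
  rw [hπ (x0 :: σ) ((cons0_mem_pair hx T₀ T₁ σ).2 hσ) w]
  constructor
  · rintro ⟨a, ha, rfl⟩
    exact ⟨a, (cons0_mem_pair hx T₀ T₁ (σ ++ [a])).1 ha, rfl⟩
  · rintro ⟨a, ha, rfl⟩
    exact ⟨a, (cons0_mem_pair hx T₀ T₁ (σ ++ [a])).2 ha, rfl⟩

lemma collapse_cone1 {X : Type*} {x0 x1 : X} (hx : x0 ≠ x1) {T₀ T₁ : Set (List X)}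
    {π : List X → ZFSet} (hπ : IsCollapse (PairT x0 x1 T₀ T₁) π) :
    IsCollapse T₁ (fun σ => π (x1 :: σ)) := by
  intro σ hσ w
  rw [hπ (x1 :: σ) ((cons1_mem_pair hx T₀ T₁ σ).2 hσ) w]
  constructor
  · rintro ⟨a, ha, rfl⟩
    exact ⟨a, (cons1_mem_pair hx T₀ T₁ (σ ++ [a])).1 ha, rfl⟩
  · rintro ⟨a, ha, rfl⟩
    exact ⟨a, (cons1_mem_pair hx T₀ T₁ (σ ++ [a])).2 ha, rfl⟩

lemma pair_root {X : Type*} {x0 x1 : X} (hx : x0 ≠ x1) {T₀ T₁ : Set (List X)}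
    (hw0 : WFTree T₀) (hw1 : WFTree T₁) (hr0 : [] ∈ T₀) (hr1 : [] ∈ T₁)
    {π₀ π₁ πP : List X → ZFSet}
    (hπ₀ : IsCollapse T₀ π₀) (hπ₁ : IsCollapse T₁ π₁)
    (hπP : IsCollapse (PairT x0 x1 T₀ T₁) πP) :
    πP [] = ({π₀ [], π₁ []} : ZFSet) := by
  have e0 : πP [x0] = π₀ [] :=
    collapse_unique hw0 (collapse_cone0 hx hπP) hπ₀ [] hr0
  have e1 : πP [x1] = π₁ [] :=
    collapse_unique hw1 (collapse_cone1 hx hπP) hπ₁ [] hr1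
  apply ZFSet.ext
  intro w
  rw [hπP [] (nil_mem_pair x0 x1 T₀ T₁) w]
  simp only [List.nil_append, ZFSet.mem_insert_iff, ZFSet.mem_singleton]
  constructor
  · rintro ⟨a, ha, rfl⟩
    rcases (single_mem_pair hx hr0 hr1 a).1 ha with rfl | rfl
    · exact Or.inl e0
    · exact Or.inr e1
  · rintro (rfl | rfl)
    · exact ⟨x0, (single_mem_pair hx hr0 hr1 x0).2 (Or.inl rfl), e0⟩
    · exact ⟨x1, (single_mem_pair hx hr0 hr1 x1).2 (Or.inr rfl), e1⟩

/-- The collapse of `Pair(T₀,T₁)` at the root is `{πT₀, πT₁}` and the collapse of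
`OPair(T₀,T₁)` at the root is the Kuratowski pair `{{πT₀},{πT₀,πT₁}}`. -/
theorem collapse_pair_opair {X : Type*} (x0 x1 : X) (hx : x0 ≠ x1)
    (T₀ T₁ : Set (List X)) (h0 : IsTree T₀) (h1 : IsTree T₁)
    (hw0 : WFTree T₀) (hw1 : WFTree T₁) (hr0 : [] ∈ T₀) (hr1 : [] ∈ T₁)
    (π₀ π₁ πP πO : List X → ZFSet)
    (hπ₀ : IsCollapse T₀ π₀) (hπ₁ : IsCollapse T₁ π₁)
    (hπP : IsCollapse (PairT x0 x1 T₀ T₁) πP)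
    (hπO : IsCollapse (OPairT x0 x1 T₀ T₁) πO) :
    πP [] = ({π₀ [], π₁ []} : ZFSet) ∧
      πO [] = ({({π₀ []} : ZFSet), ({π₀ [], π₁ []} : ZFSet)} : ZFSet) := by
  have hwA := wf_pair hx hw0 hw0
  have hwB := wf_pair hx hw0 hw1
  have hπA : IsCollapse (PairT x0 x1 T₀ T₀) (fun σ => πO (x0 :: σ)) :=
    collapse_cone0 hx hπO
  have hπB : IsCollapse (PairT x0 x1 T₀ T₁) (fun σ => πO (x1 :: σ)) :=
    collapse_cone1 hx hπO
  have hO : πO [] = ({πO [x0], πO [x1]} : ZFSet) :=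
    pair_root hx hwA hwB (nil_mem_pair x0 x1 T₀ T₀) (nil_mem_pair x0 x1 T₀ T₁)
      hπA hπB hπO
  have hA : πO [x0] = ({π₀ [], π₀ []} : ZFSet) :=
    pair_root hx hw0 hw0 hr0 hr0 hπ₀ hπ₀ hπA
  have hB : πO [x1] = ({π₀ [], π₁ []} : ZFSet) :=
    pair_root hx hw0 hw1 hr0 hr1 hπ₀ hπ₁ hπB
  have hsingle : ({π₀ [], π₀ []} : ZFSet) = ({π₀ []} : ZFSet) := by
    apply ZFSet.ext
    intro w
    simp [ZFSet.mem_insert_iff, ZFSet.mem_singleton]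
  refine ⟨pair_root hx hw0 hw1 hr0 hr1 hπ₀ hπ₁ hπP, ?_⟩
  rw [hO, hA, hB, hsingle]
end

section
/- In the bisimulation game on a well-founded tree T, Player I cannot have a winning strategy; moreover, if Player II has a winning strategy then the set B = {⟨σ,τ⟩ : following the strategy, Player II chooses to play second after Player I opens with ⟨σ,τ⟩} is a bisimulation on T. -/
/-- A round of the bisimulation game for a pair: the first mover picks a side
(`true` = left) and a letter extending that component, the second mover answers
with a letter extending the other component. -/
abbrev Rnd (X : Type*) := Bool × X × X

/-- Update the current pair of nodes by one round. -/
def stepPair {X : Type*} (p : List X × List X) (r : Rnd X) : List X × List X :=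
  if r.1 then (p.1 ++ [r.2.1], p.2 ++ [r.2.2]) else (p.1 ++ [r.2.2], p.2 ++ [r.2.1])

/-- Run a history of rounds starting from the pair `p`. -/
def runPair {X : Type*} (p : List X × List X) (h : List (Rnd X)) : List X × List X :=
  h.foldl stepPair p

/-- All moves of the history were legal (produced nodes of `T`). -/
def LegalHist {X : Type*} (T : Set (List X)) (p : List X × List X)
    (h : List (Rnd X)) : Prop :=
  ∀ h₁ (r : Rnd X), h₁ ++ [r] <+: h →
    (runPair p (h₁ ++ [r])).1 ∈ T ∧ (runPair p (h₁ ++ [r])).2 ∈ T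

/-- Both components of the current pair are terminal (the first mover is stuck,
so the second mover wins). -/
def BothTerminal {X : Type*} (T : Set (List X)) (q : List X × List X) : Prop :=
  (∀ a, q.1 ++ [a] ∉ T) ∧ (∀ a, q.2 ++ [a] ∉ T)

/-- The history is consistent with the strategy `s` of the first mover. -/
def ConsFirst {X : Type*} (s : List (Rnd X) → Bool × X) (h : List (Rnd X)) : Prop :=
  ∀ h₁ (r : Rnd X), h₁ ++ [r] <+: h → (r.1, r.2.1) = s h₁

/-- The history is consistent with the strategy `s` of the second mover. -/
def ConsSecond {X : Type*} (s : List (Rnd X) → Bool × X → X) (h : List (Rnd X)) : Prop :=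
  ∀ h₁ (r : Rnd X), h₁ ++ [r] <+: h → r.2.2 = s h₁ (r.1, r.2.1)

/-- `s` is a winning strategy for the player moving first in the bisimulation game
for the pair `p`: along any consistent legal history the current pair is never
doubly terminal and `s` always provides a legal move (so, the tree being
well founded, the opponent eventually gets stuck). -/
def FirstWins {X : Type*} (T : Set (List X)) (p : List X × List X)
    (s : List (Rnd X) → Bool × X) : Prop :=
  ∀ h, LegalHist T p h → ConsFirst s h →
    ¬ BothTerminal T (runPair p h) ∧
    (if (s h).1 then (runPair p h).1 ++ [(s h).2] ∈ T
      else (runPair p h).2 ++ [(s h).2] ∈ T)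

/-- `s` is a winning strategy for the player moving second in the bisimulation game
for the pair `p`: along any consistent legal history, `s` has a legal answer to
every legal move of the opponent. -/
def SecondWins {X : Type*} (T : Set (List X)) (p : List X × List X)
    (s : List (Rnd X) → Bool × X → X) : Prop :=
  ∀ h, LegalHist T p h → ConsSecond s h →
    ∀ (i : Bool) (a : X),
      (if i then (runPair p h).1 ++ [a] ∈ T else (runPair p h).2 ++ [a] ∈ T) →
      (if i then (runPair p h).2 ++ [s h (i, a)] ∈ T
        else (runPair p h).1 ++ [s h (i, a)] ∈ T)


section Aux
variable {X : Type*}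

lemma prefix_snoc {α : Type*} {l h : List α} {r : α} (hp : l <+: h ++ [r]) :
    l <+: h ∨ l = h ++ [r] := by
  obtain ⟨t, ht⟩ := hp
  rcases t.eq_nil_or_concat with rfl | ⟨t', x, rfl⟩
  · right; rw [← ht]; simp
  · left
    rw [List.concat_eq_append, ← List.append_assoc] at ht
    obtain ⟨h1, -⟩ := List.append_inj' ht rfl
    exact ⟨t', h1⟩

lemma snoc_inj {α : Type*} {l h : List α} {r r' : α} (he : l ++ [r] = h ++ [r']) :
    l = h ∧ r = r' := by
  have := List.append_inj' he rfl
  simpa using this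

lemma runPair_append (p : List X × List X) (h : List (Rnd X)) (r : Rnd X) :
    runPair p (h ++ [r]) = stepPair (runPair p h) r := by
  simp [runPair, List.foldl_append]

lemma runPair_cons (p : List X × List X) (r : Rnd X) (h : List (Rnd X)) :
    runPair p (r :: h) = runPair (stepPair p r) h := rfl

lemma stepPair_fst (p : List X × List X) (r : Rnd X) :
    ∃ c, (stepPair p r).1 = p.1 ++ [c] := by
  unfold stepPair; split <;> exact ⟨_, rfl⟩

lemma not_both_wins (T : Set (List X)) (hwf : WFTree T)
    (p : List X × List X) (hp1 : p.1 ∈ T) (hp2 : p.2 ∈ T)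
    (s₁ : List (Rnd X) → Bool × X) (hs₁ : FirstWins T p s₁)
    (s₂ : List (Rnd X) → Bool × X → X) (hs₂ : SecondWins T p s₂) : False := by
  set play : ℕ → List (Rnd X) :=
    fun n => Nat.rec [] (fun _ h => h ++ [((s₁ h).1, (s₁ h).2, s₂ h (s₁ h))]) n with hplay
  have hstep : ∀ n, play (n + 1) = play n ++ [((s₁ (play n)).1, (s₁ (play n)).2,
      s₂ (play n) (s₁ (play n)))] := fun n => rfl
  have inv : ∀ n, LegalHist T p (play n) ∧ ConsFirst s₁ (play n) ∧
      ConsSecond s₂ (play n) ∧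
      (runPair p (play n)).1 ∈ T ∧ (runPair p (play n)).2 ∈ T := by
    intro n
    induction n with
    | zero =>
      refine ⟨?_, ?_, ?_, hp1, hp2⟩ <;>
        · intro h₁ r hpre
          exact absurd (List.eq_nil_of_prefix_nil hpre) (by simp)
    | succ n ih =>
      obtain ⟨hleg, hc1, hc2, hm1, hm2⟩ := ih
      set q := runPair p (play n) with hq
      set m := s₁ (play n) with hm
      set b := s₂ (play n) m with hb
      set r : Rnd X := (m.1, m.2, b) with hr
      have hfw := hs₁ (play n) hleg hc1
      have hmove : if m.1 then q.1 ++ [m.2] ∈ T else q.2 ++ [m.2] ∈ T := hfw.2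
      have hresp : if m.1 then q.2 ++ [b] ∈ T else q.1 ++ [b] ∈ T := by
        have := hs₂ (play n) hleg hc2 m.1 m.2 hmove
        simpa [hb] using this
      have hnew1 : (stepPair q r).1 ∈ T ∧ (stepPair q r).2 ∈ T := by
        rcases Bool.eq_false_or_eq_true m.1 with hb1 | hb1 <;>
          simp_all [stepPair, hr]
      have hrun : runPair p (play (n + 1)) = stepPair q r := by
        rw [hstep, runPair_append]
      have hc1' : ConsFirst s₁ (play (n + 1)) := by
        intro h₁ r' hpre
        rw [hstep] at hpre
        rcases prefix_snoc hpre with h' | h'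
        · exact hc1 h₁ r' h'
        · obtain ⟨he, rfl⟩ := snoc_inj h'
          subst he; rfl
      have hc2' : ConsSecond s₂ (play (n + 1)) := by
        intro h₁ r' hpre
        rw [hstep] at hpre
        rcases prefix_snoc hpre with h' | h'
        · exact hc2 h₁ r' h'
        · obtain ⟨he, rfl⟩ := snoc_inj h'
          subst he; rfl
      refine ⟨?_, hc1', hc2', by rw [hrun]; exact hnew1.1, by rw [hrun]; exact hnew1.2⟩
      intro h₁ r' hpre
      rw [hstep] at hpre
      rcases prefix_snoc hpre with h' | h'
      · exact hleg h₁ r' h'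
      · obtain ⟨he, rfl⟩ := snoc_inj h'
        subst he
        rw [runPair_append, ← hq]
        exact hnew1
  -- contradiction with well-foundedness
  set S : Set (List X) := {x | ∃ n, x = (runPair p (play n)).1} with hS
  have hSsub : S ⊆ T := by rintro x ⟨n, rfl⟩; exact (inv n).2.2.2.1
  have hSne : S.Nonempty := ⟨(runPair p (play 0)).1, 0, rfl⟩
  obtain ⟨σ, ⟨n, rfl⟩, hmax⟩ := hwf S hSsub hSne
  obtain ⟨c, hc⟩ := stepPair_fst (runPair p (play n))
    ((s₁ (play n)).1, (s₁ (play n)).2, s₂ (play n) (s₁ (play n)))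
  have hnext : (runPair p (play (n + 1))).1 = (runPair p (play n)).1 ++ [c] := by
    rw [hstep, runPair_append]; exact hc
  have := hmax (runPair p (play (n + 1))).1 ⟨n + 1, rfl⟩ (by rw [hnext]; exact ⟨[c], rfl⟩)
  rw [hnext] at this
  simpa using congrArg List.length this

lemma secondWins_shift (T : Set (List X)) (p : List X × List X)
    (s : List (Rnd X) → Bool × X → X) (hs : SecondWins T p s) (r : Rnd X)
    (h1 : (stepPair p r).1 ∈ T) (h2 : (stepPair p r).2 ∈ T)
    (hc : r.2.2 = s [] (r.1, r.2.1)) :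
    SecondWins T (stepPair p r) (fun h => s (r :: h)) := by
  intro h hleg hcons i a hmem
  have hleg' : LegalHist T p (r :: h) := by
    intro h₁ r' hpre
    cases h₁ with
    | nil =>
      obtain ⟨he, -⟩ := List.cons_prefix_cons.mp hpre
      subst he
      constructor <;> simpa [runPair] using (by assumption : _)
    | cons r₀ t =>
      obtain ⟨he, ht⟩ := List.cons_prefix_cons.mp (by simpa using hpre)
      subst he
      have := hleg t r' ht
      simpa [runPair_cons] using this
  have hcons' : ConsSecond s (r :: h) := by
    intro h₁ r' hpre
    cases h₁ with
    | nil =>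
      obtain ⟨he, -⟩ := List.cons_prefix_cons.mp hpre
      subst he; exact hc
    | cons r₀ t =>
      obtain ⟨he, ht⟩ := List.cons_prefix_cons.mp (by simpa using hpre)
      subst he
      exact hcons t r' ht
  have := hs (r :: h) hleg' hcons' i a (by simpa [runPair_cons] using hmem)
  simpa [runPair_cons] using this

end Aux

/-- In the bisimulation game on a well-founded tree `T`, Player I cannot have a
winning strategy (i.e. there is no opening pair from which Player I wins in both
roles); and if Player II has a winning strategy (a role choice together with
strategies for either role, winning whichever role is chosen), then the set of
pairs at which Player II chooses to play second is a bisimulation on `T`. -/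

theorem bisimulation_game {X : Type*} (T : Set (List X))
    (hT : IsTree T) (hwf : WFTree T) :
    (∀ σ ∈ T, ∀ τ ∈ T,
      ¬ ((∃ s, FirstWins T (σ, τ) s) ∧ (∃ s, SecondWins T (σ, τ) s))) ∧
    (∀ (choice : List X × List X → Bool)
        (g1 : List X × List X → List (Rnd X) → Bool × X)
        (g2 : List X × List X → List (Rnd X) → Bool × X → X),
      (∀ σ ∈ T, ∀ τ ∈ T,
        (choice (σ, τ) = true → SecondWins T (σ, τ) (g2 (σ, τ))) ∧
        (choice (σ, τ) = false → FirstWins T (σ, τ) (g1 (σ, τ)))) →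
      IsBisim T (fun σ τ => σ ∈ T ∧ τ ∈ T ∧ choice (σ, τ) = true)) := by
  constructor
  · rintro σ hσ τ hτ ⟨⟨s₁, h1⟩, ⟨s₂, h2⟩⟩
    exact not_both_wins T hwf (σ, τ) hσ hτ s₁ h1 s₂ h2
  · intro choice g1 g2 hg
    rintro σ τ ⟨hσ, hτ, hch⟩
    have hsw : SecondWins T (σ, τ) (g2 (σ, τ)) := (hg σ hσ τ hτ).1 hch
    have hlegnil : LegalHist T (σ, τ) ([] : List (Rnd X)) := by
      intro h₁ r hpre
      exact absurd (List.eq_nil_of_prefix_nil hpre) (by simp)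
    have hconsnil : ConsSecond (g2 (σ, τ)) ([] : List (Rnd X)) := by
      intro h₁ r hpre
      exact absurd (List.eq_nil_of_prefix_nil hpre) (by simp)
    refine ⟨hσ, hτ, ?_, ?_⟩
    · intro a ha
      set b := g2 (σ, τ) [] (true, a) with hbdef
      have hb : τ ++ [b] ∈ T := by
        have := hsw [] hlegnil hconsnil true a (by simpa [runPair] using ha)
        simpa [runPair] using this
      refine ⟨b, hb, ha, hb, ?_⟩
      by_contra hfalse
      have hfalse' : choice (σ ++ [a], τ ++ [b]) = false := by
        simpa using hfalse
      have hfw : FirstWins T (σ ++ [a], τ ++ [b]) (g1 (σ ++ [a], τ ++ [b])) :=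
        (hg _ ha _ hb).2 hfalse'
      have hsp : stepPair (σ, τ) (true, a, b) = (σ ++ [a], τ ++ [b]) := by
        simp [stepPair]
      have hsw' := secondWins_shift T (σ, τ) (g2 (σ, τ)) hsw (true, a, b)
        (by rw [hsp]; exact ha) (by rw [hsp]; exact hb) rfl
      rw [hsp] at hsw'
      exact not_both_wins T hwf (σ ++ [a], τ ++ [b]) ha hb _ hfw _ hsw'
    · intro b hb
      set a := g2 (σ, τ) [] (false, b) with hadef
      have ha : σ ++ [a] ∈ T := by
        have := hsw [] hlegnil hconsnil false b (by simpa [runPair] using hb)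
        simpa [runPair] using this
      refine ⟨a, ha, ha, hb, ?_⟩
      by_contra hfalse
      have hfalse' : choice (σ ++ [a], τ ++ [b]) = false := by
        simpa using hfalse
      have hfw : FirstWins T (σ ++ [a], τ ++ [b]) (g1 (σ ++ [a], τ ++ [b])) :=
        (hg _ ha _ hb).2 hfalse'
      have hsp : stepPair (σ, τ) (false, b, a) = (σ ++ [a], τ ++ [b]) := by
        simp [stepPair]
      have hsw' := secondWins_shift T (σ, τ) (g2 (σ, τ)) hsw (false, b, a)
        (by rw [hsp]; exact ha) (by rw [hsp]; exact hb) rfl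
      rw [hsp] at hsw'
      exact not_both_wins T hwf (σ ++ [a], τ ++ [b]) ha hb _ hfw _ hsw'
end

section
/- (Descent transfer for base-ω exponentiation of linear orders.) Let Λ be a linear order (or quasi-linear order) and consider the ordered set O(0,Λ) of formal sums ω^{λ₀} + ⋯ + ω^{λ_n} with λ₀ ≥ ⋯ ≥ λ_n in Λ, ordered by the usual comparison of Cantor normal forms. If O(0,Λ) admits an infinite strictly descending sequence, then Λ admits an infinite strictly descending sequence. Equivalently: if Λ is well-founded, then O(0,Λ) is well-founded. -/
/-!
Every weakly decreasing list is accessible for the lexicographic order, by well-founded induction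
on a bound `b` for its head and, inside it, induction on the accessibility of its tail: `b :: t`
lies only above `[]`, above `b :: t'` with `t'` below `t` (inner induction), and above lists with
head `c < b` (outer induction). Descending sequences transfer by contraposition.
-/

namespace List

variable {α : Type*} [Preorder α]

/-- Stated on plain lists, with the chain condition only on the smaller side, so that
accessibility can be proved by induction on lists without subtype bookkeeping. -/
def ChainLex (l₁ l₂ : List α) : Prop :=
  l₁.IsChain (· ≥ ·) ∧ Lex (· < ·) l₁ l₂

theorem acc_chainLex_nil : Acc (ChainLex (α := α)) [] :=
  ⟨_, fun _ ⟨_, h⟩ => nomatch h⟩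

theorem acc_chainLex_cons {b : α}
    (hlt : ∀ c < b, ∀ l, (c :: l).IsChain (· ≥ ·) → Acc ChainLex (c :: l))
    {t : List α} (ht : Acc ChainLex t) : Acc ChainLex (b :: t) := by
  induction ht with
  | intro t _ ih =>
    refine ⟨_, fun l ⟨hl, hlex⟩ => ?_⟩
    cases hlex with
    | nil => exact acc_chainLex_nil
    | cons h => exact ih _ ⟨hl.tail, h⟩
    | rel h => exact hlt _ h _ hl

theorem acc_chainLex_of_head_le {b : α} (hb : Acc (· < ·) b) :
    ∀ l : List α, l.IsChain (· ≥ ·) → (∀ x ∈ l.head?, x ≤ b) → Acc ChainLex l := by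
  induction hb with
  | intro b _ ihb =>
    intro l
    induction l with
    | nil => exact fun _ _ => acc_chainLex_nil
    | cons c t iht =>
      intro hct hcb
      have hcb : c ≤ b := hcb c rfl
      obtain ⟨hhead, ht⟩ := isChain_cons.1 hct
      exact acc_chainLex_cons
        (fun d hdc l hl => ihb d (hdc.trans_le hcb) _ hl (by simp))
        (iht ht fun x hx => (hhead x hx).trans hcb)

theorem wellFounded_chainLex (hwf : WellFounded ((· < ·) : α → α → Prop)) :
    WellFounded (ChainLex (α := α)) := by
  refine ⟨fun l => ⟨_, fun l' ⟨hl', _⟩ => ?_⟩⟩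
  cases l' with
  | nil => exact acc_chainLex_nil
  | cons b t => exact acc_chainLex_of_head_le (hwf.apply b) _ hl' (by simp)

theorem wellFounded_lex_isChain_ge (hwf : WellFounded ((· < ·) : α → α → Prop)) :
    WellFounded fun l₁ l₂ : {l : List α // l.IsChain (· ≥ ·)} => Lex (· < ·) l₁.1 l₂.1 :=
  Subrelation.wf (fun {l₁ _} h => ⟨l₁.2, h⟩) (InvImage.wf Subtype.val (wellFounded_chainLex hwf))

end List

/-- Descent transfer for base-ω exponentiation of linear orders: `O(0,Λ)` is the
set of formal sums `ω^{λ₀} + ⋯ + ω^{λ_n}` with `λ₀ ≥ ⋯ ≥ λ_n`, i.e. weakly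
decreasing finite lists from `Λ`, ordered as Cantor normal forms (lexicographically,
a proper initial segment being smaller). If `O(0,Λ)` has an infinite strictly
descending sequence then so does `Λ`; equivalently, if `Λ` is well-founded then
so is `O(0,Λ)`. -/
theorem descent_transfer {Λ : Type*} [LinearOrder Λ] :
    ((∃ f : ℕ → {l : List Λ // l.Chain' (· ≥ ·)},
        ∀ n, List.Lex (· < ·) (f (n + 1)).1 (f n).1) →
      ∃ g : ℕ → Λ, ∀ n, g (n + 1) < g n) ∧
    (WellFounded ((· < ·) : Λ → Λ → Prop) →
      WellFounded (fun a b : {l : List Λ // l.Chain' (· ≥ ·)} =>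
        List.Lex (· < ·) a.1 b.1)) := by
  refine ⟨fun ⟨f, hf⟩ => ?_, List.wellFounded_lex_isChain_ge⟩
  by_contra hΛ
  have hwf : WellFounded ((· < ·) : Λ → Λ → Prop) :=
    wellFounded_iff_isEmpty_descending_chain.2 ⟨fun ⟨g, hg⟩ => hΛ ⟨g, hg⟩⟩
  exact (wellFounded_iff_isEmpty_descending_chain.1 (List.wellFounded_lex_isChain_ge hwf)).false
    ⟨f, hf⟩
end

section
/- (Combinatorial core of dual Dedekind finiteness in the Cohen model.) Let n ≥ 1, let E ⊆ ω be finite, and let h : ω^n → ω^n ∪ {∅} be a function such that for every τ ∈ ω^n, either h(τ) = ∅ or rng(h(τ)) ⊆ rng(τ) ∪ E. Then h is not surjective onto ω^n ∪ {∅}. -/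
private lemma finite_pi_mem (n : ℕ) (S : Finset ℕ) :
    {f : Fin n → ℕ | ∀ i, f i ∈ S}.Finite := by
  have : {f : Fin n → ℕ | ∀ i, f i ∈ S} = Set.pi Set.univ (fun _ => (S : Set ℕ)) := by
    ext f; simp [Set.mem_pi]
  rw [this]
  exact Set.Finite.pi (fun _ => S.finite_toSet)

private lemma pigeon {α β : Type*} (T : Set α) (hT : T.Finite) (f : α → β)
    (hf : Function.Injective f) (g : α → β) (b : β) (hb : b ∉ f '' T)
    (hsub : insert b (f '' T) ⊆ g '' T) : False := by
  have h1 : (insert b (f '' T)).ncard = T.ncard + 1 := by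
    rw [Set.ncard_insert_of_notMem hb (hT.image f), Set.ncard_image_of_injective _ hf]
  have h2 : (g '' T).ncard ≤ T.ncard := Set.ncard_image_le hT
  have h3 := Set.ncard_le_ncard hsub (hT.image g)
  omega

/-- Combinatorial core of dual Dedekind finiteness in the Cohen model: let
`n ≥ 1`, `E ⊆ ω` finite, and `h : ω^n → ω^n ∪ {∅}` (with `none` playing the role
of the extra element `∅`) such that whenever `h τ ≠ ∅`, every entry of `h τ` lies
in `rng(τ) ∪ E`. Then `h` is not surjective onto `ω^n ∪ {∅}`. -/
theorem cohen_combinatorial_core (n : ℕ) (hn : 1 ≤ n) (E : Finset ℕ)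
    (h : (Fin n → ℕ) → Option (Fin n → ℕ))
    (hrng : ∀ τ σ, h τ = some σ → ∀ i, σ i ∈ Set.range τ ∨ σ i ∈ E) :
    ¬ Function.Surjective h := by
  intro hsurj
  set R : (Fin n → ℕ) → Finset ℕ := fun τ => Finset.image τ Finset.univ \ E with hR
  have hcard : ∀ τ : Fin n → ℕ, (R τ).card ≤ n := by
    intro τ
    calc (R τ).card ≤ (Finset.image τ Finset.univ).card :=
          Finset.card_le_card Finset.sdiff_subset
      _ ≤ (Finset.univ : Finset (Fin n)).card := Finset.card_image_le
      _ = n := by simp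
  -- membership lemma: x ∈ R τ iff x is an entry of τ not in E
  have hmemR : ∀ (τ : Fin n → ℕ) (x : ℕ), x ∈ R τ ↔ (∃ i, τ i = x) ∧ x ∉ E := by
    intro τ x; simp [hR]
  -- key induction
  have key : ∀ j, ∃ σ : Option (Fin n → ℕ),
      (∀ τ', σ = some τ' → (R τ').card ≤ j) ∧
      (∀ τ, (R τ).card ≤ j → h τ ≠ σ) := by
    intro j
    induction j with
    | zero =>
      by_contra hc
      push_neg at hc
      have hmem : ∀ τ : Fin n → ℕ, (R τ).card ≤ 0 ↔ ∀ i, τ i ∈ E := by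
        intro τ
        simp [hR, Nat.le_zero, Finset.card_eq_zero, Finset.sdiff_eq_empty_iff_subset,
          Finset.image_subset_iff]
      set T : Set (Fin n → ℕ) := {τ | ∀ i, τ i ∈ E} with hT
      have hTfin : T.Finite := finite_pi_mem n E
      refine pigeon T hTfin some (Option.some_injective _) h none (by simp) ?_
      intro σ hσ
      rcases Set.mem_insert_iff.mp hσ with rfl | hσ
      · obtain ⟨τ, hτc, hτh⟩ := hc none (by simp)
        exact ⟨τ, (hmem τ).mp hτc, hτh⟩
      · obtain ⟨σ', hσ'T, rfl⟩ := hσ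
        obtain ⟨τ, hτc, hτh⟩ := hc (some σ')
          (by rintro τ' hh; injection hh with hh; subst hh; exact (hmem _).mpr hσ'T)
        exact ⟨τ, (hmem τ).mp hτc, hτh⟩
    | succ j ih =>
      obtain ⟨σ₀, hσ₀a, hσ₀b⟩ := ih
      by_contra hc
      push_neg at hc
      obtain ⟨τ₀, hτ₀c, hτ₀h⟩ := hc σ₀
        (fun τ' hτ' => le_trans (hσ₀a τ' hτ') (Nat.le_succ j))
      have hτ₀card : (R τ₀).card = j + 1 := by
        have : ¬ (R τ₀).card ≤ j := fun hle => hσ₀b τ₀ hle hτ₀h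
        omega
      set D : Finset ℕ := R τ₀ with hD
      set T : Set (Fin n → ℕ) := {τ | R τ = D} with hT
      -- T is finite
      have hTsub : T ⊆ {f : Fin n → ℕ | ∀ i, f i ∈ D ∪ E} := by
        intro τ hτ i
        by_cases hiE : τ i ∈ E
        · exact Finset.mem_union_right _ hiE
        · refine Finset.mem_union_left _ ?_
          rw [← hτ, hmemR]
          exact ⟨⟨i, rfl⟩, hiE⟩
      have hTfin : T.Finite := (finite_pi_mem n (D ∪ E)).subset hTsub
      -- τ₀ ∈ T
      have hτ₀T : τ₀ ∈ T := rfl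
      -- σ₀ ∉ some '' T
      have hσ₀not : σ₀ ∉ some '' T := by
        rintro ⟨τ', hτ'T, rfl⟩
        have h1 : (R τ').card ≤ j := hσ₀a τ' rfl
        have h2 : R τ' = D := hτ'T
        have h3 : D.card ≤ j := by rw [← h2]; exact h1
        omega
      refine pigeon T hTfin some (Option.some_injective _) h σ₀ hσ₀not ?_
      intro σ hσ
      rcases Set.mem_insert_iff.mp hσ with rfl | hσ
      · exact ⟨τ₀, hτ₀T, hτ₀h⟩
      · obtain ⟨σ', hσ'T, rfl⟩ := hσ
        have hσ'card : (R σ').card ≤ j + 1 := by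
          have : R σ' = D := hσ'T
          rw [this]; omega
        obtain ⟨τ, hτc, hτh⟩ := hc (some σ') (by rintro τ' ⟨rfl⟩; exact hσ'card)
        refine ⟨τ, ?_, hτh⟩
        -- show R τ = D, i.e. R σ' ⊆ R τ and card forces equality
        have hsub : R σ' ⊆ R τ := by
          intro x hx
          rw [hmemR] at hx ⊢
          obtain ⟨⟨i, rfl⟩, hxE⟩ := hx
          rcases hrng τ σ' hτh i with ⟨i', hi'⟩ | hE
          · exact ⟨⟨i', hi'⟩, hxE⟩
          · exact absurd hE hxE
        have hDeq : R σ' = D := hσ'T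
        have : R σ' = R τ := Finset.eq_of_subset_of_card_le hsub (by rw [hDeq]; omega)
        show R τ = D
        rw [← this, hDeq]
  obtain ⟨σ, -, hσ⟩ := key n
  obtain ⟨τ, hτ⟩ := hsurj σ
  exact hσ τ (hcard τ) hτ
end
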